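/- arXiv:2410.21634 — 2 statements merged into one kernel-verified Lean document; each statement's English description precedes it below -/
import Mathlib

section
/- Under the LocalGD iteration r^{(t+1)} = r^{(t)} − Q r_{S_t}^{(t)} with Q = I − βP, P ≥ 0 entrywise, βP_max < 1 (P_max an upper bound on ||Pv||_1/||v||_1 for nonnegative v), and r^{(0)} ≥ 0, the residual norms ||r^{(t)}||_1 form a monotonically nonincreasing sequence and each r^{(t)} is entrywise nonnegative. -/
/-!
Write `s = r_{S_t}`, so that `0 ≤ s ≤ r` whenever `r ≥ 0`. A LocalGD step reads
`r' = (r - s) + β P s`, a sum of nonnegative vectors, so nonnegativity propagates by induction.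
For nonnegative vectors the ℓ1 norm is the coordinate sum, which is linear; hence
`‖r'‖₁ = ‖r‖₁ - ‖s‖₁ + β ‖P s‖₁ ≤ ‖r‖₁ - (1 - β P_max) ‖s‖₁ ≤ ‖r‖₁`.
-/

open Matrix

section

variable {ι : Type*} [Fintype ι]

theorem Matrix.mulVec_nonneg_of_nonneg {m R : Type*} [Semiring R] [PartialOrder R]
    [IsOrderedRing R] {M : Matrix m ι R} (hM : ∀ i j, 0 ≤ M i j) {v : ι → R} (hv : 0 ≤ v) :
    0 ≤ M *ᵥ v :=
  fun i => dotProduct_nonneg_of_nonneg (fun j => hM i j) hv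

theorem sum_abs_of_nonneg {v : ι → ℝ} (hv : 0 ≤ v) : ∑ i, |v i| = ∑ i, v i :=
  Finset.sum_congr rfl fun i _ => abs_of_nonneg (hv i)

variable [DecidableEq ι]

theorem Matrix.sub_one_sub_smul_mulVec {R : Type*} [CommRing R] (P : Matrix ι ι R) (β : R)
    (r s : ι → R) : r - (1 - β • P) *ᵥ s = (r - s) + β • (P *ᵥ s) := by
  rw [sub_mulVec, one_mulVec, smul_mulVec]
  abel

variable {P : Matrix ι ι ℝ} {β : ℝ} {r s : ι → ℝ}

theorem localGD_step_nonneg (hP : ∀ i j, 0 ≤ P i j) (hβ : 0 ≤ β) (hs : 0 ≤ s) (hsr : s ≤ r) :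
    0 ≤ r - (1 - β • P) *ᵥ s := by
  rw [sub_one_sub_smul_mulVec]
  exact add_nonneg (sub_nonneg.mpr hsr) (smul_nonneg hβ (mulVec_nonneg_of_nonneg hP hs))

theorem localGD_step_sum_le {Pmax : ℝ} (hβ : 0 ≤ β) (hs : 0 ≤ s)
    (hPmax : ∑ i, (P *ᵥ s) i ≤ Pmax * ∑ i, s i) (hβP : β * Pmax < 1) :
    ∑ i, (r - (1 - β • P) *ᵥ s : ι → ℝ) i ≤ ∑ i, r i := by
  have hsum_s : 0 ≤ ∑ i, s i := Finset.sum_nonneg fun i _ => hs i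
  have hgain : β * ∑ i, (P *ᵥ s) i ≤ ∑ i, s i :=
    calc β * ∑ i, (P *ᵥ s) i ≤ β * (Pmax * ∑ i, s i) := mul_le_mul_of_nonneg_left hPmax hβ
      _ = (β * Pmax) * ∑ i, s i := (mul_assoc _ _ _).symm
      _ ≤ ∑ i, s i := mul_le_of_le_one_left hsum_s hβP.le
  rw [sub_one_sub_smul_mulVec]
  simp only [Pi.add_apply, Pi.sub_apply, Pi.smul_apply, smul_eq_mul,
    Finset.sum_add_distrib, Finset.sum_sub_distrib, ← Finset.mul_sum]
  linarith

end

/-- Along the LocalGD iteration `r^{(t+1)} = r^{(t)} - Q r_{S_t}^{(t)}` with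
`Q = I - βP`, `P ≥ 0`, `β P_max < 1` (`P_max` an upper bound on `‖Pv‖₁/‖v‖₁`
for nonnegative `v`), and `r^{(0)} ≥ 0`, every residual is entrywise nonnegative
and the ℓ1 norms of the residuals are monotonically nonincreasing. -/
theorem localGD_nonneg_monotone (n : ℕ) (P : Matrix (Fin n) (Fin n) ℝ)
    (hP : ∀ i j, 0 ≤ P i j) (β : ℝ) (hβ : 0 ≤ β)
    (Pmax : ℝ)
    (hPmax : ∀ v : Fin n → ℝ, (∀ i, 0 ≤ v i) →
      ∑ i, |(P *ᵥ v) i| ≤ Pmax * ∑ i, |v i|)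
    (hβP : β * Pmax < 1)
    (r : ℕ → Fin n → ℝ) (hr0 : ∀ i, 0 ≤ r 0 i)
    (S : ℕ → Finset (Fin n))
    (hrec : ∀ t, r (t + 1) =
      r t - (1 - β • P) *ᵥ (fun i => if i ∈ S t then r t i else 0)) :
    (∀ t i, 0 ≤ r t i) ∧ ∀ t, (∑ i, |r (t + 1) i|) ≤ ∑ i, |r t i| := by
  set s : ℕ → Fin n → ℝ := fun t i => if i ∈ S t then r t i else 0 with hs_def
  have hs_nonneg {t} (hr : 0 ≤ r t) : 0 ≤ s t := fun i => by
    simp only [hs_def]; split_ifs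
    exacts [hr i, le_rfl]
  have hs_le {t} (hr : 0 ≤ r t) : s t ≤ r t := fun i => by
    simp only [hs_def]; split_ifs
    exacts [le_rfl, hr i]
  have hnonneg : ∀ t, 0 ≤ r t := by
    intro t
    induction t with
    | zero => exact hr0
    | succ t ih => rw [hrec]; exact localGD_step_nonneg hP hβ (hs_nonneg ih) (hs_le ih)
  refine ⟨hnonneg, fun t => ?_⟩
  have hPs : 0 ≤ P *ᵥ s t := mulVec_nonneg_of_nonneg hP (hs_nonneg (hnonneg t))
  have hPmax_s := hPmax (s t) (hs_nonneg (hnonneg t))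
  rw [sum_abs_of_nonneg hPs, sum_abs_of_nonneg (hs_nonneg (hnonneg t))] at hPmax_s
  rw [sum_abs_of_nonneg (hnonneg _), sum_abs_of_nonneg (hnonneg _), hrec]
  exact localGD_step_sum_le hβ (hs_nonneg (hnonneg t)) hPmax_s hβP
end

section
/- For the PPR LocalSOR/LocalGD stopping condition: if r = αe_s − (I − (1−α)AD^{-1})x with ||D^{-1}r||_∞ ≤ αε on an undirected graph without isolated vertices, then the estimate x satisfies ||D^{-1}(x − f_PPR)||_∞ ≤ ε, where f_PPR = α(I − (1−α)AD^{-1})^{-1} e_s. -/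
/-!
The error `y = x - f_PPR` solves `(I - (1 - α) A D⁻¹) y = -r`, i.e.
`y u = (1 - α) ∑_{w ~ u} y w / d w - r u`. At a vertex `u` maximizing `M = |y u| / d u` the
neighbour sum is at most `d u * M` in absolute value, so `M ≤ (1 - α) M + |r u| / d u`, whence
`α M ≤ α ε`. The case `r = 0` of the same estimate shows that the PPR matrix is invertible.
-/

open Matrix

namespace SimpleGraph

variable {V : Type*} [Fintype V] {G : SimpleGraph V} [DecidableRel G.Adj]

theorem abs_sum_neighborFinset_div_degree_le {y : V → ℝ} {M : ℝ}
    (hM : ∀ w, |y w| / G.degree w ≤ M) (u : V) :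
    |∑ w ∈ G.neighborFinset u, y w / G.degree w| ≤ G.degree u * M :=
  calc |∑ w ∈ G.neighborFinset u, y w / G.degree w|
      ≤ ∑ w ∈ G.neighborFinset u, |y w / G.degree w| := Finset.abs_sum_le_sum_abs _ _
    _ ≤ ∑ _w ∈ G.neighborFinset u, M := Finset.sum_le_sum fun w _ => by
        simpa only [abs_div, Nat.abs_cast] using hM w
    _ = G.degree u * M := by
        rw [Finset.sum_const, card_neighborFinset_eq_degree, nsmul_eq_mul]

variable [DecidableEq V]

variable (G) in
noncomputable def pprMatrix (α : ℝ) : Matrix V V ℝ :=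
  1 - (1 - α) • (G.adjMatrix ℝ * (diagonal fun v => (G.degree v : ℝ))⁻¹)

theorem inv_diagonal_degree (hdeg : ∀ v, 0 < G.degree v) :
    (diagonal fun v => (G.degree v : ℝ))⁻¹ = diagonal fun v => (G.degree v : ℝ)⁻¹ :=
  inv_eq_right_inv <| by
    rw [diagonal_mul_diagonal, ← diagonal_one]
    congr 1
    ext v
    exact mul_inv_cancel₀ (Nat.cast_ne_zero.2 (hdeg v).ne')

theorem pprMatrix_mulVec_apply (hdeg : ∀ v, 0 < G.degree v) (α : ℝ) (y : V → ℝ) (u : V) :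
    (G.pprMatrix α *ᵥ y) u = y u - (1 - α) * ∑ w ∈ G.neighborFinset u, y w / G.degree w := by
  simp only [pprMatrix, sub_mulVec, one_mulVec, smul_mulVec, ← mulVec_mulVec,
    inv_diagonal_degree hdeg, mulVec_diagonal, Pi.sub_apply, Pi.smul_apply, smul_eq_mul,
    adjMatrix_mulVec_apply, div_eq_inv_mul]

theorem abs_div_degree_le_of_pprMatrix_mulVec (hdeg : ∀ v, 0 < G.degree v) {α ε : ℝ}
    (hα : 0 < α) (hα1 : α ≤ 1) {y : V → ℝ}
    (hy : ∀ u, |(G.pprMatrix α *ᵥ y) u| / G.degree u ≤ α * ε) (u : V) :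
    |y u| / G.degree u ≤ ε := by
  set z : V → ℝ := fun w => |y w| / G.degree w
  obtain ⟨u₀, -, hmax⟩ := Finset.exists_max_image Finset.univ z ⟨u, Finset.mem_univ u⟩
  have hd₀ : (0 : ℝ) < G.degree u₀ := Nat.cast_pos.2 (hdeg u₀)
  have hsum := abs_sum_neighborFinset_div_degree_le (fun w => hmax w (Finset.mem_univ w)) u₀
  have hrow : |y u₀| ≤ |(G.pprMatrix α *ᵥ y) u₀| + (1 - α) * (G.degree u₀ * z u₀) := by
    rw [pprMatrix_mulVec_apply hdeg]
    have := abs_sub_abs_le_abs_sub (y u₀) ((1 - α) * ∑ w ∈ G.neighborFinset u₀, y w / G.degree w)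
    rw [abs_mul, abs_of_nonneg (sub_nonneg.2 hα1)] at this
    nlinarith
  have hz₀ : z u₀ ≤ α * ε + (1 - α) * z u₀ := by
    have := hy u₀
    rw [div_le_iff₀ hd₀] at this ⊢
    nlinarith
  calc z u ≤ z u₀ := hmax u (Finset.mem_univ u)
    _ ≤ ε := le_of_mul_le_mul_left (by linarith) hα

theorem isUnit_pprMatrix (hdeg : ∀ v, 0 < G.degree v) {α : ℝ} (hα : 0 < α) (hα1 : α ≤ 1) :
    IsUnit (G.pprMatrix α) := by
  refine mulVec_injective_iff_isUnit.1 fun y₁ y₂ h => ?_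
  funext u
  have := abs_div_degree_le_of_pprMatrix_mulVec hdeg hα hα1 (ε := 0) (y := y₁ - y₂)
    (fun u => by simp [mulVec_sub, h]) u
  have hd : (0 : ℝ) < G.degree u := Nat.cast_pos.2 (hdeg u)
  rw [div_le_iff₀ hd, zero_mul, abs_nonpos_iff, Pi.sub_apply, sub_eq_zero] at this
  exact this

end SimpleGraph

open SimpleGraph

theorem ppr_estimate_quality_general (n : ℕ) (G : SimpleGraph (Fin n)) [DecidableRel G.Adj]
    (hdeg : ∀ v, 0 < G.degree v) (α ε : ℝ) (hα : 0 < α) (hα1 : α < 1)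
    (s : Fin n)
    (e : Fin n → Fin n → ℝ)
    (Q : Matrix (Fin n) (Fin n) ℝ)
    (hQ : Q = 1 - (1 - α) •
      (G.adjMatrix ℝ * (Matrix.diagonal fun v => (G.degree v : ℝ))⁻¹))
    (fppr : Fin n → ℝ) (hf : fppr = α • (Q⁻¹ *ᵥ e s))
    (x r : Fin n → ℝ) (hr : r = α • e s - Q *ᵥ x)
    (hstop : ∀ u, |r u| / (G.degree u : ℝ) ≤ α * ε) :
    ∀ u, |x u - fppr u| / (G.degree u : ℝ) ≤ ε := by
  change Q = G.pprMatrix α at hQ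
  subst hQ
  have hQf : G.pprMatrix α *ᵥ fppr = α • e s := by
    rw [hf, mulVec_smul, mulVec_mulVec, mul_nonsing_inv _
      ((isUnit_iff_isUnit_det _).1 (isUnit_pprMatrix hdeg hα hα1.le)), one_mulVec]
  have hres : G.pprMatrix α *ᵥ (x - fppr) = -r := by
    rw [mulVec_sub, hQf, hr, neg_sub]
  refine abs_div_degree_le_of_pprMatrix_mulVec hdeg hα hα1.le (y := x - fppr) fun u => ?_
  rw [hres, Pi.neg_apply, abs_neg]
  exact hstop u

/-- Estimation quality of the PPR local solvers: if
`r = α e_s - (I - (1-α) A D⁻¹) x` with `r ≥ 0` and `‖D⁻¹ r‖_∞ ≤ αε`, then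
`‖D⁻¹ (x - f_PPR)‖_∞ ≤ ε`, where `f_PPR = α (I - (1-α) A D⁻¹)⁻¹ e_s`. -/
theorem ppr_estimate_quality (n : ℕ) (G : SimpleGraph (Fin n)) [DecidableRel G.Adj]
    (hdeg : ∀ v, 0 < G.degree v) (α ε : ℝ) (hα : 0 < α) (hα1 : α < 1) (hε : 0 < ε)
    (s : Fin n)
    (e : Fin n → Fin n → ℝ) (he : ∀ i, e i = Pi.single i 1)
    (Q : Matrix (Fin n) (Fin n) ℝ)
    (hQ : Q = 1 - (1 - α) •
      (G.adjMatrix ℝ * (Matrix.diagonal fun v => (G.degree v : ℝ))⁻¹))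
    (hQu : IsUnit Q)
    (fppr : Fin n → ℝ) (hf : fppr = α • (Q⁻¹ *ᵥ e s))
    (x r : Fin n → ℝ) (hr : r = α • e s - Q *ᵥ x)
    (hrpos : ∀ u, 0 ≤ r u)
    (hstop : ∀ u, |r u| / (G.degree u : ℝ) ≤ α * ε) :
    ∀ u, |x u - fppr u| / (G.degree u : ℝ) ≤ ε :=
  ppr_estimate_quality_general n G hdeg α ε hα hα1 s e Q hQ fppr hf x r hr hstop
end
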